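/- (Lemma 2, uniform disagreement bound.) Let w1, w2, w3 > 0, let G be a connected simple undirected graph on N ≥ 2 vertices with Laplacian L and degree matrix D, and let d > 0, ν > 0. Then there exists h0 > 0 such that for every h ∈ (0, h0) there exist constants S1 > 0 and S2 > 0 (independent of the initial data and of the disturbance) with the following property: for every choice of initial vectors Δ⁰, Δ̇⁰ ∈ ℝ^N and every disturbance sequence (αᵏ)_{k≥1} with ‖αᵏ‖_∞ ≤ d·e^{−ν·k·h} for all k ≥ 1, the closed-loop sequences satisfy, for all ℓ ≥ 1 and all i, j ∈ {1,…,N}: |Δˡ_i − Δˡ_j| ≤ S1·max{‖Δ⁰‖_∞, ‖Δ̇⁰‖_∞} + S2·d. -/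

import Mathlib

open Matrix

noncomputable def Sh (w1 w2 w3 h : ℝ) : ℝ := w3 + w2 * h ^ 2 + w1 * h ^ 4 / 4

noncomputable def ah (w1 w2 w3 h : ℝ) : ℝ := w1 * h ^ 2 / (2 * Sh w1 w2 w3 h)

noncomputable def bh (w1 w2 w3 h : ℝ) : ℝ := (w2 * h + w1 * h ^ 3 / 2) / Sh w1 w2 w3 h

/-!
`D⁻¹L` is similar to the symmetric normalised Laplacian `D^{-1/2} L D^{-1/2}`, so it is
diagonalisable with real eigenvalues; by Gershgorin they lie in `[0, 2]`, and since `G` is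
connected the eigenvalue `0` belongs only to the constant (consensus) vectors, which cancel in
`Δᵢ - Δⱼ`. Projecting the closed loop onto a left eigenvector with eigenvalue `λ ∈ (0, 2]` gives a
planar linear recursion with characteristic polynomial
`z² - (2 - h b - h² a λ / 2) z + (1 - h b + h² a λ / 2)`, whose roots lie in the open unit disc
because `h a < b` and `h b < 2` (Jury's criterion). Factoring it as `(z - μ₁)(z - μ₂)` turns the
recursion into two first-order contractions driven by the bounded disturbance, so each such modal
coordinate stays below a multiple of `max ‖Δ⁰‖ ‖Δ̇⁰‖ + d`. This works for every step size `h > 0`.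
-/

/-- `z² - T z + P` has both roots in the open unit disc (Jury's criterion). -/
def IsSchurStable (T P : ℝ) : Prop := P < 1 ∧ |T| < 1 + P

lemma le_add_div_one_sub_of_le_mul_add {u : ℕ → ℝ} {ρ c : ℝ} (hρ₀ : 0 ≤ ρ) (hρ₁ : ρ < 1)
    (hc : 0 ≤ c) (hu₀ : 0 ≤ u 0) (hu : ∀ k, u (k + 1) ≤ ρ * u k + c) (k : ℕ) :
    u k ≤ u 0 + c / (1 - ρ) := by
  have h1ρ : 0 < 1 - ρ := by linarith
  induction k with
  | zero => simpa using div_nonneg hc h1ρ.le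
  | succ k ih =>
    have key : ρ * (u 0 + c / (1 - ρ)) + c = ρ * u 0 + c / (1 - ρ) := by
      field_simp; ring
    nlinarith [hu k, mul_le_mul_of_nonneg_left ih hρ₀]

lemma Complex.exists_add_eq_and_mul_eq (T P : ℝ) : ∃ μ₁ μ₂ : ℂ, μ₁ + μ₂ = T ∧ μ₁ * μ₂ = P := by
  obtain ⟨s, hs⟩ := IsAlgClosed.exists_eq_mul_self ((T : ℂ) ^ 2 - 4 * P)
  exact ⟨(T + s) / 2, (T - s) / 2, by ring, by linear_combination hs / 4⟩

lemma IsSchurStable.norm_lt_one {T P : ℝ} (hTP : IsSchurStable T P) {μ : ℂ}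
    (hμ : μ ^ 2 - T * μ + P = 0) : ‖μ‖ < 1 := by
  obtain ⟨hP, hT⟩ := hTP
  have hre : μ.re ^ 2 - μ.im ^ 2 - T * μ.re + P = 0 := by
    simpa [sq] using congrArg Complex.re hμ
  have him : μ.im * (2 * μ.re - T) = 0 := by
    have := congrArg Complex.im hμ
    simp [sq] at this
    linarith
  rw [abs_lt] at hT
  suffices ‖μ‖ ^ 2 < 1 by nlinarith [norm_nonneg μ]
  rw [Complex.sq_norm, Complex.normSq_apply]
  rcases mul_eq_zero.1 him with him | hre'
  · rw [him] at hre ⊢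
    have h₁ : μ.re < 1 := by
      by_contra! h
      nlinarith [mul_nonneg (sub_nonneg.2 h) (by linarith : (0 : ℝ) ≤ μ.re + 1 - T)]
    have h₂ : -1 < μ.re := by
      by_contra! h
      nlinarith [mul_nonneg (by linarith : (0 : ℝ) ≤ -1 - μ.re)
        (by linarith : (0 : ℝ) ≤ 1 - μ.re - T)]
    nlinarith
  · nlinarith

lemma IsSchurStable.exists_abs_le_of_linear_recurrence {T P : ℝ} (hTP : IsSchurStable T P) :
    ∃ K ≥ 0, ∀ (x δ : ℕ → ℝ) (c : ℝ), (∀ k, |δ k| ≤ c) →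
      (∀ k, x (k + 2) = T * x (k + 1) - P * x k + δ k) →
      ∀ k, |x k| ≤ K * (|x 0| + |x 1| + c) := by
  obtain ⟨μ₁, μ₂, hsum, hprod⟩ := Complex.exists_add_eq_and_mul_eq T P
  have hμ₁ : ‖μ₁‖ < 1 := hTP.norm_lt_one (by rw [← hsum, ← hprod]; ring)
  have hμ₂ : ‖μ₂‖ < 1 := hTP.norm_lt_one (by rw [← hsum, ← hprod]; ring)
  set ρ := max ‖μ₁‖ ‖μ₂‖
  have hρ₀ : 0 ≤ ρ := (norm_nonneg _).trans (le_max_left _ _)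
  have hρ₁ : ρ < 1 := max_lt hμ₁ hμ₂
  set t := (1 - ρ)⁻¹
  have ht : 1 ≤ t := one_le_inv₀ (by linarith) |>.2 (by linarith)
  refine ⟨(1 + t) ^ 2, by positivity, fun x δ c hδ hx k => ?_⟩
  have hc : 0 ≤ c := (abs_nonneg _).trans (hδ 0)
  -- the factorisation `(z - μ₁)(z - μ₂)` splits the recursion into two first-order ones
  set v : ℕ → ℂ := fun k => x (k + 1) - μ₁ * x k
  have hv : ∀ k, ‖v (k + 1)‖ ≤ ρ * ‖v k‖ + c := by
    intro k
    have hvk : v (k + 1) = μ₂ * v k + δ k := by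
      simp only [v, hx k]
      push_cast
      linear_combination (x k : ℂ) * hprod - (x (k + 1) : ℂ) * hsum
    calc ‖v (k + 1)‖ ≤ ‖μ₂‖ * ‖v k‖ + |δ k| := by
          rw [hvk, ← norm_mul, ← Real.norm_eq_abs, ← Complex.norm_real]
          exact norm_add_le _ _
      _ ≤ ρ * ‖v k‖ + c := by
          gcongr
          · exact le_max_right _ _
          · exact hδ k
  have hvb := le_add_div_one_sub_of_le_mul_add (u := fun k => ‖v k‖) hρ₀ hρ₁ hc
    (norm_nonneg _) hv
  have hx₁ : ∀ k, |x (k + 1)| ≤ ρ * |x k| + (‖v 0‖ + c / (1 - ρ)) := by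
    intro k
    calc |x (k + 1)| = ‖μ₁ * x k + v k‖ := by
          simp only [v, add_sub_cancel, Complex.norm_real, Real.norm_eq_abs]
      _ ≤ ρ * |x k| + ‖v k‖ := by
          refine (norm_add_le _ _).trans ?_
          rw [norm_mul, Complex.norm_real, Real.norm_eq_abs]
          gcongr
          exact le_max_left _ _
      _ ≤ _ := by gcongr; exact hvb k
  have hxb : |x k| ≤ |x 0| + (‖v 0‖ + c * t) * t := by
    simpa only [div_eq_mul_inv] using
      le_add_div_one_sub_of_le_mul_add (u := fun k => |x k|) hρ₀ hρ₁ (by positivity)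
        (abs_nonneg _) hx₁ k
  have hv₀ : ‖v 0‖ ≤ |x 1| + |x 0| := by
    calc ‖v 0‖ ≤ ‖(x 1 : ℂ)‖ + ‖μ₁ * x 0‖ := norm_sub_le _ _
      _ = |x 1| + ‖μ₁‖ * |x 0| := by simp
      _ ≤ |x 1| + |x 0| := by gcongr; nlinarith [abs_nonneg (x 0)]
  have ht₀ : 0 ≤ t := by linarith
  nlinarith [mul_le_mul_of_nonneg_right hv₀ ht₀, mul_nonneg (abs_nonneg (x 0)) ht₀,
    mul_nonneg (abs_nonneg (x 0)) (mul_nonneg ht₀ ht₀), mul_nonneg (abs_nonneg (x 1)) ht₀,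
    mul_nonneg (abs_nonneg (x 1)) (mul_nonneg ht₀ ht₀), mul_nonneg hc ht₀]

lemma IsSchurStable.exists_abs_le_of_planar_recurrence {p q r s : ℝ}
    (hstab : IsSchurStable (p + s) (p * s - q * r)) :
    ∃ K ≥ 0, ∀ (x y f g : ℕ → ℝ) (c : ℝ), (∀ k, |f k| ≤ c) → (∀ k, |g k| ≤ c) →
      (∀ k, x (k + 1) = p * x k + q * y k + f k) → (∀ k, y (k + 1) = r * x k + s * y k + g k) →
      ∀ k, |x k| ≤ K * (|x 0| + |y 0| + c) := by
  obtain ⟨K, hK, hbound⟩ := hstab.exists_abs_le_of_linear_recurrence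
  refine ⟨K * (2 + |p| + |q| + |s|), by positivity, fun x y f g c hf hg hx hy k => ?_⟩
  have hδ : ∀ k, |f (k + 1) - s * f k + q * g k| ≤ (1 + |s| + |q|) * c := fun k => by
    calc |f (k + 1) - s * f k + q * g k| ≤ |f (k + 1) - s * f k| + |q * g k| := abs_add_le _ _
      _ ≤ |f (k + 1)| + |s| * |f k| + |q| * |g k| := by
          rw [← abs_mul, ← abs_mul]; gcongr; exact abs_sub _ _
      _ ≤ (1 + |s| + |q|) * c := by
          nlinarith [hf (k + 1), hf k, hg k, abs_nonneg s, abs_nonneg q]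
  have hx₁ : |x 1| ≤ |p| * |x 0| + |q| * |y 0| + c := by
    rw [hx 0, ← abs_mul, ← abs_mul]
    exact (abs_add_three _ _ _).trans (by gcongr; exact hf 0)
  have hinit : |x 0| + |x 1| + (1 + |s| + |q|) * c ≤
      (2 + |p| + |q| + |s|) * (|x 0| + |y 0| + c) := by
    have hc : 0 ≤ c := (abs_nonneg _).trans (hf 0)
    nlinarith [abs_nonneg (x 0), abs_nonneg (y 0), mul_nonneg (abs_nonneg q) (abs_nonneg (x 0)),
      mul_nonneg (abs_nonneg s) (abs_nonneg (x 0)), mul_nonneg (abs_nonneg p) (abs_nonneg (y 0)),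
      mul_nonneg (abs_nonneg s) (abs_nonneg (y 0)), mul_nonneg (abs_nonneg p) hc]
  calc |x k| ≤ K * (|x 0| + |x 1| + (1 + |s| + |q|) * c) :=
        hbound x _ _ hδ (fun k => by linear_combination hx (k + 1) + q * hy k - s * hx k) k
    _ ≤ K * ((2 + |p| + |q| + |s|) * (|x 0| + |y 0| + c)) := by gcongr
    _ = _ := by ring

lemma Matrix.IsHermitian.exists_mul_eq_one_and_mul_diagonal_inv_mul {n : Type*} [Fintype n]
    [DecidableEq n] {L : Matrix n n ℝ} (hL : L.IsHermitian) {d : n → ℝ} (hd : ∀ i, 0 < d i) :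
    ∃ (P Q : Matrix n n ℝ) (μ : n → ℝ), P * Q = 1 ∧ Q * (diagonal d⁻¹ * L) = diagonal μ * Q := by
  set S := diagonal fun i => √(d i)
  set S' := diagonal fun i => (√(d i))⁻¹
  have hsqrt : ∀ i, √(d i) ≠ 0 := fun i => (Real.sqrt_pos.2 (hd i)).ne'
  have hS'S : S' * S = 1 := by
    rw [diagonal_mul_diagonal, ← diagonal_one]; congr 1; ext i; exact inv_mul_cancel₀ (hsqrt i)
  have hSd : S * diagonal d⁻¹ = S' := by
    rw [diagonal_mul_diagonal]; congr 1; ext i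
    field_simp [hsqrt i]
    rw [Real.sq_sqrt (hd i).le, Pi.inv_apply, mul_inv_cancel₀ (hd i).ne']
  -- `diagonal d⁻¹ * L = S' (S' L S') S'⁻¹`, and `S' L S'` is symmetric
  have hB : (S' * L * S').IsHermitian := by
    simpa [S', diagonal_conjTranspose] using isHermitian_mul_mul_conjTranspose S' hL
  set U : Matrix n n ℝ := (hB.eigenvectorUnitary : Matrix n n ℝ)
  have hU : U * star U = 1 := Unitary.coe_mul_star_self _
  have hU' : star U * U = 1 := Unitary.coe_star_mul_self _
  obtain ⟨μ, hspec⟩ : ∃ μ, S' * L * S' = U * diagonal μ * star U :=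
    ⟨_, by simpa [RCLike.ofReal_real_eq_id] using hB.spectral_theorem⟩
  refine ⟨S' * U, star U * S, μ, ?_, ?_⟩
  · rw [Matrix.mul_assoc, ← Matrix.mul_assoc U, hU, Matrix.one_mul, hS'S]
  · calc star U * S * (diagonal d⁻¹ * L) = star U * (S' * L * S') * S := by
          simp only [Matrix.mul_assoc]
          rw [hS'S, Matrix.mul_one, ← hSd, Matrix.mul_assoc]
      _ = diagonal μ * (star U * S) := by
          rw [hspec]; simp only [← Matrix.mul_assoc, hU', Matrix.one_mul]

lemma Matrix.sub_eq_sum_of_mul_eq_one {V : Type*} [Fintype V] [DecidableEq V]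
    {P Q : Matrix V V ℝ} (hPQ : P * Q = 1) (x : V → ℝ) (i j : V) :
    x i - x j = ∑ p, (P i p - P j p) * (Q *ᵥ x) p := by
  have hx : x = P *ᵥ (Q *ᵥ x) := by rw [mulVec_mulVec, hPQ, one_mulVec]
  conv_lhs => rw [hx]
  simp only [mulVec, dotProduct, ← Finset.sum_sub_distrib, sub_mul]

namespace SimpleGraph

variable {V : Type*} [Fintype V] [DecidableEq V] (G : SimpleGraph V) [DecidableRel G.Adj]

noncomputable def randomWalkLapMatrix : Matrix V V ℝ :=
  diagonal (fun i => (G.degree i : ℝ)⁻¹) * G.lapMatrix ℝ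

variable {G}

lemma randomWalkLapMatrix_apply (i j : V) :
    G.randomWalkLapMatrix i j = (G.degree i : ℝ)⁻¹ * G.lapMatrix ℝ i j := by
  rw [randomWalkLapMatrix, diagonal_mul]

lemma lapMatrix_mulVec_eq_zero_of_randomWalkLapMatrix_mulVec_eq_zero {v : V → ℝ}
    (hdeg : ∀ i, 0 < G.degree i) (hv : G.randomWalkLapMatrix *ᵥ v = 0) :
    G.lapMatrix ℝ *ᵥ v = 0 := by
  ext i
  have := congrFun hv i
  rw [randomWalkLapMatrix, ← mulVec_mulVec, mulVec_diagonal] at this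
  simpa [(Nat.cast_pos.2 (hdeg i)).ne'] using this

/-- Gershgorin: every row of `randomWalkLapMatrix` has diagonal entry `1` and off-diagonal
mass `1`. -/
lemma mem_Icc_of_randomWalkLapMatrix_mulVec_eq_smul {v : V → ℝ} {μ : ℝ}
    (hdeg : ∀ i, 0 < G.degree i) (hv : v ≠ 0) (hμ : G.randomWalkLapMatrix *ᵥ v = μ • v) :
    μ ∈ Set.Icc 0 2 := by
  obtain ⟨k, hk⟩ := eigenvalue_mem_ball (A := G.randomWalkLapMatrix)
    (Module.End.hasEigenvalue_of_hasEigenvector ⟨Module.End.mem_eigenspace_iff.2 hμ, hv⟩)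
  have hdk : (G.degree k : ℝ) ≠ 0 := (Nat.cast_pos.2 (hdeg k)).ne'
  have hdiag : G.randomWalkLapMatrix k k = 1 := by
    simp [randomWalkLapMatrix_apply, lapMatrix, degMatrix, hdk]
  have hoff : ∑ j ∈ Finset.univ.erase k, ‖G.randomWalkLapMatrix k j‖ = 1 := by
    have : ∀ j ∈ Finset.univ.erase k, ‖G.randomWalkLapMatrix k j‖ =
        (G.degree k : ℝ)⁻¹ * if G.Adj k j then 1 else 0 := by
      intro j hj
      have hjk : k ≠ j := (Finset.ne_of_mem_erase hj).symm
      by_cases hadj : G.Adj k j <;>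
        simp [randomWalkLapMatrix_apply, lapMatrix, degMatrix, hjk, hadj]
    rw [Finset.sum_congr rfl this, ← Finset.mul_sum, Finset.sum_erase _ (by simp),
      ← degree_eq_sum_if_adj, inv_mul_cancel₀ hdk]
  rw [Metric.mem_closedBall, hdiag, hoff, Real.dist_eq, abs_le] at hk
  constructor <;> linarith

lemma Connected.exists_modal_decomposition [Nontrivial V] (hG : G.Connected) :
    ∃ (P Q : Matrix V V ℝ) (μ : V → ℝ), P * Q = 1 ∧ Q * G.randomWalkLapMatrix = diagonal μ * Q ∧
      (∀ p, μ p ∈ Set.Icc 0 2) ∧ ∀ p, μ p = 0 → ∀ i j, P i p = P j p := by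
  have hdeg : ∀ i, 0 < G.degree i := fun i => hG.preconnected.degree_pos_of_nontrivial i
  obtain ⟨P, Q, μ, hPQ, hQM⟩ :=
    (G.isHermitian_lapMatrix ℝ).exists_mul_eq_one_and_mul_diagonal_inv_mul
      (d := fun i => (G.degree i : ℝ)) fun i => Nat.cast_pos.2 (hdeg i)
  replace hQM : Q * G.randomWalkLapMatrix = diagonal μ * Q := hQM
  have hQP : Q * P = 1 := mul_eq_one_comm.1 hPQ
  have hMP : G.randomWalkLapMatrix * P = P * diagonal μ := by
    calc G.randomWalkLapMatrix * P = P * (Q * G.randomWalkLapMatrix) * P := by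
          rw [← Matrix.mul_assoc P Q, hPQ, Matrix.one_mul]
      _ = P * diagonal μ := by rw [hQM, Matrix.mul_assoc, Matrix.mul_assoc, hQP, Matrix.mul_one]
  have hmulVec_col : ∀ (A : Matrix V V ℝ) p i, (A *ᵥ fun j => P j p) i = (A * P) i p :=
    fun _ _ _ => rfl
  have hcol : ∀ p, G.randomWalkLapMatrix *ᵥ (fun i => P i p) = μ p • fun i => P i p :=
    fun p => by ext i; simp [hmulVec_col, hMP, mul_diagonal, mul_comm]
  have hne : ∀ p, (fun i => P i p) ≠ 0 := fun p h => by
    simpa [hmulVec_col, hQP] using congrFun (congrArg (Q *ᵥ ·) h) p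
  refine ⟨P, Q, μ, hPQ, hQM,
    fun p => mem_Icc_of_randomWalkLapMatrix_mulVec_eq_smul hdeg (hne p) (hcol p),
    fun p hp i j => ?_⟩
  have hker := lapMatrix_mulVec_eq_zero_of_randomWalkLapMatrix_mulVec_eq_zero hdeg
    (by simpa [hp] using hcol p)
  exact (lapMatrix_mulVec_eq_zero_iff_forall_reachable G).1 hker i j (hG.preconnected i j)

end SimpleGraph

section ClosedLoop

variable {V : Type*} [Fintype V] [DecidableEq V]

def IsClosedLoop (M : Matrix V V ℝ) (a b h : ℝ) (Δ Δdot U α : ℕ → V → ℝ) : Prop :=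
  ∀ k : ℕ, 1 ≤ k →
    U k = -(a • (M *ᵥ Δ (k - 1))) - b • Δdot (k - 1) + a • α k ∧
    Δ k = Δ (k - 1) - α k + h • Δdot (k - 1) + (h ^ 2 / 2) • U k ∧
    Δdot k = Δdot (k - 1) + h • U k

variable {M P Q : Matrix V V ℝ} {μ : V → ℝ} {a b h : ℝ}

lemma IsClosedLoop.modal_eq {Δ Δdot U α : ℕ → V → ℝ} (hcl : IsClosedLoop M a b h Δ Δdot U α)
    (hQM : Q * M = diagonal μ * Q) (p : V) (k : ℕ) :
    (Q *ᵥ Δ (k + 1)) p = (1 - h ^ 2 / 2 * a * μ p) * (Q *ᵥ Δ k) p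
        + (h - h ^ 2 / 2 * b) * (Q *ᵥ Δdot k) p + (h ^ 2 / 2 * a - 1) * (Q *ᵥ α (k + 1)) p ∧
    (Q *ᵥ Δdot (k + 1)) p = -(h * a * μ p) * (Q *ᵥ Δ k) p
        + (1 - h * b) * (Q *ᵥ Δdot k) p + h * a * (Q *ᵥ α (k + 1)) p := by
  obtain ⟨hU, hΔ, hΔdot⟩ := hcl (k + 1) (Nat.le_add_left 1 k)
  simp only [Nat.add_sub_cancel] at hU hΔ hΔdot
  have hQMx : (Q *ᵥ (M *ᵥ Δ k)) p = μ p * (Q *ᵥ Δ k) p := by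
    rw [mulVec_mulVec, hQM, ← mulVec_mulVec, mulVec_diagonal]
  rw [hΔdot, hΔ, hU]
  simp only [mulVec_add, mulVec_sub, mulVec_neg, mulVec_smul, Pi.add_apply, Pi.sub_apply,
    Pi.neg_apply, Pi.smul_apply, smul_eq_mul, hQMx]
  constructor <;> ring

attribute [local instance] Matrix.linftyOpNormedAddCommGroup in
lemma IsClosedLoop.exists_abs_mulVec_apply_le (hQM : Q * M = diagonal μ * Q) (p : V)
    (hstab : IsSchurStable ((1 - h ^ 2 / 2 * a * μ p) + (1 - h * b))
      ((1 - h ^ 2 / 2 * a * μ p) * (1 - h * b) - (h - h ^ 2 / 2 * b) * -(h * a * μ p))) :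
    ∃ K, ∀ (Δ Δdot U α : ℕ → V → ℝ) (d : ℝ), (∀ k, 1 ≤ k → ‖α k‖ ≤ d) →
      IsClosedLoop M a b h Δ Δdot U α →
      ∀ l, |(Q *ᵥ Δ l) p| ≤ K * (max ‖Δ 0‖ ‖Δdot 0‖ + d) := by
  obtain ⟨K, hK, hplanar⟩ := hstab.exists_abs_le_of_planar_recurrence
  set γ := |h ^ 2 / 2 * a - 1| + |h * a|
  refine ⟨K * ‖Q‖ * (2 + γ), fun Δ Δdot U α d hα hcl l => ?_⟩
  have hd : 0 ≤ d := (norm_nonneg _).trans (hα 1 le_rfl)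
  have hcoord : ∀ x, |(Q *ᵥ x) p| ≤ ‖Q‖ * ‖x‖ := fun x =>
    (norm_le_pi_norm (Q *ᵥ x) p).trans (linfty_opNorm_mulVec Q x)
  have hforce : ∀ e k, |e * (Q *ᵥ α (k + 1)) p| ≤ |e| * (‖Q‖ * d) := fun e k => by
    rw [abs_mul]
    gcongr
    exact (hcoord _).trans (by gcongr; exact hα _ (Nat.le_add_left 1 k))
  have hγ₁ : |h ^ 2 / 2 * a - 1| ≤ γ := le_add_of_nonneg_right (abs_nonneg _)
  have hγ₂ : |h * a| ≤ γ := le_add_of_nonneg_left (abs_nonneg _)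
  have hmode := hplanar (fun k => (Q *ᵥ Δ k) p) (fun k => (Q *ᵥ Δdot k) p) _ _ (γ * (‖Q‖ * d))
    (fun k => (hforce _ k).trans (by gcongr)) (fun k => (hforce _ k).trans (by gcongr))
    (fun k => (hcl.modal_eq hQM p k).1) (fun k => (hcl.modal_eq hQM p k).2) l
  have hM : 0 ≤ max ‖Δ 0‖ ‖Δdot 0‖ := (norm_nonneg _).trans (le_max_left _ _)
  calc |(Q *ᵥ Δ l) p| ≤ K * (|(Q *ᵥ Δ 0) p| + |(Q *ᵥ Δdot 0) p| + γ * (‖Q‖ * d)) := hmode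
    _ ≤ K * (‖Q‖ * max ‖Δ 0‖ ‖Δdot 0‖ + ‖Q‖ * max ‖Δ 0‖ ‖Δdot 0‖ + γ * (‖Q‖ * d)) := by
        gcongr
        · exact (hcoord _).trans (by gcongr; exact le_max_left _ _)
        · exact (hcoord _).trans (by gcongr; exact le_max_right _ _)
    _ ≤ K * ‖Q‖ * (2 + γ) * (max ‖Δ 0‖ ‖Δdot 0‖ + d) := by
        have hKQ : 0 ≤ K * ‖Q‖ := by positivity
        nlinarith [mul_nonneg hKQ (mul_nonneg (by positivity : 0 ≤ γ) hM)]

lemma isSchurStable_closedLoop_mode {θ : ℝ} (hh : 0 < h) (ha : 0 < a) (hθ : θ ∈ Set.Ioc 0 2)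
    (hab : h * a < b) (hb : h * b < 2) :
    IsSchurStable ((1 - h ^ 2 / 2 * a * θ) + (1 - h * b))
      ((1 - h ^ 2 / 2 * a * θ) * (1 - h * b) - (h - h ^ 2 / 2 * b) * -(h * a * θ)) := by
  obtain ⟨hθ₀, hθ₂⟩ := hθ
  have hhaθ : 0 < h * a * θ := by positivity
  refine ⟨by nlinarith [mul_le_mul_of_nonneg_left hθ₂ (mul_pos hh ha).le], abs_lt.2 ⟨?_, ?_⟩⟩
  · nlinarith
  · nlinarith

theorem IsClosedLoop.exists_abs_sub_le (hPQ : P * Q = 1) (hQM : Q * M = diagonal μ * Q)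
    (hμ : ∀ p, μ p ∈ Set.Icc 0 2) (hker : ∀ p, μ p = 0 → ∀ i j, P i p = P j p)
    (hh : 0 < h) (ha : 0 < a) (hab : h * a < b) (hb : h * b < 2) :
    ∃ S > 0, ∀ (Δ Δdot U α : ℕ → V → ℝ) (d : ℝ), (∀ k, 1 ≤ k → ‖α k‖ ≤ d) →
      IsClosedLoop M a b h Δ Δdot U α →
      ∀ l i j, |Δ l i - Δ l j| ≤ S * (max ‖Δ 0‖ ‖Δdot 0‖ + d) := by
  have hmode : ∀ p, ∃ C, ∀ (Δ Δdot U α : ℕ → V → ℝ) (d : ℝ), (∀ k, 1 ≤ k → ‖α k‖ ≤ d) →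
      IsClosedLoop M a b h Δ Δdot U α →
      ∀ l i j, |(P i p - P j p) * (Q *ᵥ Δ l) p| ≤ C * (max ‖Δ 0‖ ‖Δdot 0‖ + d) := by
    intro p
    rcases (hμ p).1.eq_or_lt with hp | hp
    · -- the consensus mode has a constant shape, so it cancels in the disagreement
      refine ⟨0, fun Δ Δdot U α d _ _ l i j => ?_⟩
      simp [hker p hp.symm i j]
    · obtain ⟨K, hK⟩ := IsClosedLoop.exists_abs_mulVec_apply_le hQM p
        (isSchurStable_closedLoop_mode hh ha ⟨hp, (hμ p).2⟩ hab hb)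
      obtain ⟨B, hB⟩ := Finite.exists_le fun ij : V × V => |P ij.1 p - P ij.2 p|
      refine ⟨B * K, fun Δ Δdot U α d hα hcl l i j => ?_⟩
      rw [abs_mul, mul_assoc]
      exact mul_le_mul (hB (i, j)) (hK Δ Δdot U α d hα hcl l) (abs_nonneg _)
        ((abs_nonneg _).trans (hB (i, j)))
  choose C hC using hmode
  refine ⟨1 + ∑ p, |C p|, by positivity, fun Δ Δdot U α d hα hcl l i j => ?_⟩
  have hMd : 0 ≤ max ‖Δ 0‖ ‖Δdot 0‖ + d :=
    add_nonneg ((norm_nonneg _).trans (le_max_left _ _)) ((norm_nonneg _).trans (hα 1 le_rfl))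
  rw [Matrix.sub_eq_sum_of_mul_eq_one hPQ]
  calc |∑ p, (P i p - P j p) * (Q *ᵥ Δ l) p|
      ≤ ∑ p, |(P i p - P j p) * (Q *ᵥ Δ l) p| := Finset.abs_sum_le_sum_abs _ _
    _ ≤ ∑ p, |C p| * (max ‖Δ 0‖ ‖Δdot 0‖ + d) := Finset.sum_le_sum fun p _ =>
        (hC p Δ Δdot U α d hα hcl l i j).trans (by gcongr; exact le_abs_self _)
    _ ≤ (1 + ∑ p, |C p|) * (max ‖Δ 0‖ ‖Δdot 0‖ + d) := by
        rw [← Finset.sum_mul]; gcongr; linarith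

end ClosedLoop

lemma Sh_pos {w1 w2 w3 : ℝ} (hw1 : 0 ≤ w1) (hw2 : 0 ≤ w2) (hw3 : 0 < w3) (h : ℝ) :
    0 < Sh w1 w2 w3 h := by
  unfold Sh; positivity

lemma ah_pos {w1 w2 w3 h : ℝ} (hw1 : 0 < w1) (hw2 : 0 ≤ w2) (hw3 : 0 < w3) (hh : h ≠ 0) :
    0 < ah w1 w2 w3 h := by
  have := Sh_pos hw1.le hw2 hw3 h
  unfold ah; positivity

lemma mul_ah_lt_bh {w1 w2 w3 h : ℝ} (hw1 : 0 ≤ w1) (hw2 : 0 < w2) (hw3 : 0 < w3) (hh : 0 < h) :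
    h * ah w1 w2 w3 h < bh w1 w2 w3 h := by
  have hS := Sh_pos hw1 hw2.le hw3 h
  rw [ah, bh, mul_div_assoc', div_lt_div_iff₀ (by positivity) hS]
  nlinarith [mul_pos (mul_pos hw2 hh) hS]

lemma mul_bh_lt_two {w1 w2 w3 : ℝ} (hw1 : 0 ≤ w1) (hw2 : 0 ≤ w2) (hw3 : 0 < w3) (h : ℝ) :
    h * bh w1 w2 w3 h < 2 := by
  have hS := Sh_pos hw1 hw2 hw3 h
  rw [bh, mul_div_assoc', div_lt_iff₀ hS, Sh]
  nlinarith [sq_nonneg h, mul_nonneg hw2 (sq_nonneg h)]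

theorem uniform_disagreement_bound
    (w1 w2 w3 : ℝ) (hw1 : 0 < w1) (hw2 : 0 < w2) (hw3 : 0 < w3)
    (N : ℕ) (hN : 2 ≤ N) (G : SimpleGraph (Fin N)) [DecidableRel G.Adj]
    (hG : G.Connected) (d ν : ℝ) (hd : 0 < d) (hν : 0 < ν) :
    ∃ h0 > 0, ∀ h : ℝ, 0 < h → h < h0 →
      ∃ S1 > 0, ∃ S2 > 0,
        ∀ Δ Δdot U α : ℕ → Fin N → ℝ,
          (∀ k : ℕ, 1 ≤ k → ‖α k‖ ≤ d * Real.exp (-ν * k * h)) →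
          (∀ k : ℕ, 1 ≤ k →
            U k = -(ah w1 w2 w3 h •
                    (((Matrix.diagonal fun i => ((G.degree i : ℝ))⁻¹) * G.lapMatrix ℝ)
                      *ᵥ Δ (k - 1)))
                  - bh w1 w2 w3 h • Δdot (k - 1) + ah w1 w2 w3 h • α k ∧
            Δ k = Δ (k - 1) - α k + h • Δdot (k - 1) + (h ^ 2 / 2) • U k ∧
            Δdot k = Δdot (k - 1) + h • U k) →
          ∀ l : ℕ, 1 ≤ l → ∀ i j : Fin N,
            |Δ l i - Δ l j| ≤ S1 * max ‖Δ 0‖ ‖Δdot 0‖ + S2 * d := by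
  have : Nontrivial (Fin N) := Fin.nontrivial_iff_two_le.2 hN
  obtain ⟨P, Q, μ, hPQ, hQM, hμ, hker⟩ := hG.exists_modal_decomposition
  refine ⟨1, one_pos, fun h hh _ => ?_⟩
  obtain ⟨S, hS, hbound⟩ := IsClosedLoop.exists_abs_sub_le hPQ hQM hμ hker hh
    (ah_pos hw1 hw2.le hw3 hh.ne') (mul_ah_lt_bh hw1.le hw2 hw3 hh)
    (mul_bh_lt_two hw1.le hw2.le hw3 h)
  refine ⟨S, hS, S, hS, fun Δ Δdot U α hα hcl l _ i j => ?_⟩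
  have hα' : ∀ k, 1 ≤ k → ‖α k‖ ≤ d := fun k hk => (hα k hk).trans <|
    mul_le_of_le_one_right hd.le (Real.exp_le_one_iff.2 (by
      rw [neg_mul, neg_mul, neg_nonpos]; positivity))
  linarith [hbound Δ Δdot U α d hα' hcl l i j]
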